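/- For every p ≥ 1 and q ≥ 0, the number g^{(p,1^q)} of standard increasing tableaux of the hook shape (p,1^q) equals the Delannoy number D(p−1, q). -/

import Mathlib

open Finset

namespace HookG

/-- Cells of the skew diagram λ/μ (0-indexed). -/
def skewCells (lam mu : YoungDiagram) : Finset (ℕ × ℕ) := lam.cells \ mu.cells

/-- The maximal entry `m(T)` of a tableau (which is 0 outside the shape). -/
def maxEntry (lam mu : YoungDiagram) (T : ℕ × ℕ → ℕ) : ℕ := (skewCells lam mu).sup T

/-- `T` is a filling of λ/μ by positive integers, strictly increasing along rows and
down columns, and zero outside of λ/μ. -/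
def IsIncreasing (lam mu : YoungDiagram) (T : ℕ × ℕ → ℕ) : Prop :=
  (∀ u, u ∉ skewCells lam mu → T u = 0) ∧
  (∀ u ∈ skewCells lam mu, 1 ≤ T u) ∧
  (∀ i j₁ j₂, j₁ < j₂ → (i, j₁) ∈ skewCells lam mu → (i, j₂) ∈ skewCells lam mu →
      T (i, j₁) < T (i, j₂)) ∧
  (∀ i₁ i₂ j, i₁ < i₂ → (i₁, j) ∈ skewCells lam mu → (i₂, j) ∈ skewCells lam mu →
      T (i₁, j) < T (i₂, j))

/-- Standard increasing tableau: the set of entries is exactly `{1, …, m(T)}`. -/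
def IsSIT (lam mu : YoungDiagram) (T : ℕ × ℕ → ℕ) : Prop :=
  IsIncreasing lam mu T ∧
  ∀ k, 1 ≤ k → k ≤ maxEntry lam mu T → ∃ u ∈ skewCells lam mu, T u = k

/-- `ν_{i+1}(T_{<k})` (for the 0-indexed row `i`): the number of cells in row `i` of the
diagram consisting of μ together with the cells of `T` carrying an entry < k. -/
def nuRow (lam mu : YoungDiagram) (T : ℕ × ℕ → ℕ) (k i : ℕ) : ℕ :=
  (lam.cells.filter fun u => u.1 = i ∧ (u ∈ mu.cells ∨ (1 ≤ T u ∧ T u < k))).card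

/-- Hook length of the (0-indexed) cell `u = (i,j)` of λ:
`h = λ_{i+1} + λ'_{j+1} - i - j - 1` (1-indexed: `λ_i − j + λ'_j − i + 1`). -/
def hook (lam : YoungDiagram) (u : ℕ × ℕ) : ℕ :=
  lam.rowLen u.1 + lam.colLen u.2 - u.1 - u.2 - 1

/-- `|T|`, the sum of the entries of a tableau. -/
def entrySum (lam mu : YoungDiagram) (T : ℕ × ℕ → ℕ) : ℕ := ∑ u ∈ skewCells lam mu, T u

/-- `a(T_{≥k})`, the number of cells of `T` with entry ≥ k. -/
def aGe (lam mu : YoungDiagram) (T : ℕ × ℕ → ℕ) (k : ℕ) : ℕ :=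
  ((skewCells lam mu).filter fun u => k ≤ T u).card

/-- The cell `(i,j)` of `D` is active: `(i+1,j), (i,j+1), (i+1,j+1)` all belong to `λ ∖ D`. -/
def ActiveCell (lam : YoungDiagram) (D : Finset (ℕ × ℕ)) (i j : ℕ) : Prop :=
  (i, j) ∈ D ∧
  ((i + 1, j) ∈ lam.cells ∧ (i + 1, j) ∉ D) ∧
  ((i, j + 1) ∈ lam.cells ∧ (i, j + 1) ∉ D) ∧
  ((i + 1, j + 1) ∈ lam.cells ∧ (i + 1, j + 1) ∉ D)

/-- An excited move of type I (replace the active cell by `(i+1,j+1)`)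
or of type II (add `(i+1,j+1)` keeping the active cell). -/
def GenMove (lam : YoungDiagram) (D D' : Finset (ℕ × ℕ)) : Prop :=
  ∃ i j, ActiveCell lam D i j ∧
    (D' = insert (i + 1, j + 1) (D.erase (i, j)) ∨ D' = insert (i + 1, j + 1) D)

/-- The set `D(λ/μ)` of generalized excited diagrams: all subsets of λ obtained from the
Young diagram of μ by sequences of excited moves of both types. -/
def GenExcited (lam mu : YoungDiagram) : Set (Finset (ℕ × ℕ)) :=
  {D | Relation.ReflTransGen (GenMove lam) mu.cells D}

end HookG

open HookG

namespace HookG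

/-- The hook shape `(p, 1^q)`: first row of length p and q further rows of length 1. -/
def hookShape (p q : ℕ) : YoungDiagram where
  cells := (Finset.range (q + 1) ×ˢ Finset.range p).filter fun u => u.1 = 0 ∨ u.2 = 0
  isLowerSet := by
    intro a b hba ha
    simp only [Finset.coe_filter, Set.mem_setOf_eq, Finset.mem_product,
      Finset.mem_range] at ha ⊢
    obtain ⟨⟨h1, h2⟩, h3⟩ := ha
    refine ⟨⟨lt_of_le_of_lt hba.1 h1, lt_of_le_of_lt hba.2 h2⟩, ?_⟩
    rcases h3 with h | h
    · exact Or.inl (Nat.le_zero.mp (h ▸ hba.1))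
    · exact Or.inr (Nat.le_zero.mp (h ▸ hba.2))

/-- Sum of the first coordinates of the steps of a lattice path. -/
def sumFst (L : List (ℕ × ℕ)) : ℕ := (L.map Prod.fst).sum

/-- Sum of the second coordinates of the steps of a lattice path. -/
def sumSnd (L : List (ℕ × ℕ)) : ℕ := (L.map Prod.snd).sum

/-- A Delannoy path from (0,0) to (m,n): steps (0,1), (1,0), (1,1). -/
def IsDelannoyPath (m n : ℕ) (L : List (ℕ × ℕ)) : Prop :=
  (∀ s ∈ L, s = (1, 0) ∨ s = (0, 1) ∨ s = (1, 1)) ∧ sumFst L = m ∧ sumSnd L = n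

/-- The Delannoy number D(m,n), as the number of Delannoy paths from (0,0) to (m,n). -/
noncomputable def delannoy (m n : ℕ) : ℕ := Nat.card {L : List (ℕ × ℕ) // IsDelannoyPath m n L}

end HookG

namespace HookG

/-! ### Auxiliary: `nth` smallest element of a finset of naturals -/

def nth (s : Finset ℕ) (j : ℕ) : ℕ := (s.sort (· ≤ ·)).getD j 0

lemma nth_mem {s : Finset ℕ} {j : ℕ} (h : j < s.card) : nth s j ∈ s := by
  have hl : j < (s.sort (· ≤ ·)).length := by rwa [Finset.length_sort]
  rw [nth, List.getD_eq_get _ _ ⟨j, hl⟩]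
  exact (Finset.mem_sort (· ≤ ·)).1 (List.get_mem _ ⟨j, hl⟩)

lemma nth_lt_nth {s : Finset ℕ} {i j : ℕ} (hij : i < j) (hj : j < s.card) :
    nth s i < nth s j := by
  have hl : j < (s.sort (· ≤ ·)).length := by rwa [Finset.length_sort]
  have hi : i < (s.sort (· ≤ ·)).length := lt_trans hij hl
  rw [nth, nth, List.getD_eq_get _ _ ⟨j, hl⟩, List.getD_eq_get _ _ ⟨i, hi⟩]
  exact List.pairwise_iff_get.1 (Finset.sortedLT_sort s).pairwise ⟨i, hi⟩ ⟨j, hl⟩ hij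

lemma nth_surj {s : Finset ℕ} {x : ℕ} (hx : x ∈ s) : ∃ j < s.card, nth s j = x := by
  obtain ⟨⟨j, hj⟩, hget⟩ := List.mem_iff_get.1 ((Finset.mem_sort (· ≤ ·)).2 hx)
  exact ⟨j, by rwa [Finset.length_sort] at hj, by rw [nth, List.getD_eq_get _ _ ⟨j, hj⟩, hget]⟩

lemma nth_unique {s : Finset ℕ} {k : ℕ} (hk : s.card = k) (f : ℕ → ℕ)
    (hmem : ∀ j < k, f j ∈ s) (hmono : ∀ i j, i < j → j < k → f i < f j) :
    ∀ j < k, f j = nth s j := by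
  have h1 : (fun j : Fin k => f j) = s.orderEmbOfFin hk :=
    Finset.orderEmbOfFin_unique hk (fun x => hmem x x.2)
      (fun a b hab => hmono a b hab b.2)
  have h2 : (fun j : Fin k => nth s j) = s.orderEmbOfFin hk :=
    Finset.orderEmbOfFin_unique hk (fun x => nth_mem (hk ▸ x.2))
      (fun a b hab => nth_lt_nth hab (hk ▸ b.2))
  intro j hj
  exact congrFun (h1.trans h2.symm) ⟨j, hj⟩

lemma nth_zero {s : Finset ℕ} (h1 : (1:ℕ) ∈ s) (hall : ∀ x ∈ s, 1 ≤ x) :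
    nth s 0 = 1 := by
  obtain ⟨j, hj, hnth⟩ := nth_surj h1
  rcases Nat.eq_zero_or_pos j with h0 | h0
  · rwa [h0] at hnth
  · have h2 : nth s 0 < nth s j := nth_lt_nth h0 hj
    have h3 : 1 ≤ nth s 0 := hall _ (nth_mem (lt_of_le_of_lt (Nat.zero_le _) hj))
    omega

/-! ### Auxiliary: sums over lists via `getD` -/

lemma sum_list_range (n : ℕ) (f : ℕ → ℕ) :
    ((List.range n).map f).sum = ∑ t ∈ Finset.range n, f t := by
  induction n with
  | zero => simp
  | succ n ih => rw [List.range_succ, Finset.sum_range_succ, List.map_append,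
      List.sum_append, ih]; simp

lemma sumFst_eq (L : List (ℕ × ℕ)) :
    sumFst L = ∑ t ∈ Finset.range L.length, (L.getD t (0,0)).1 := by
  induction L with
  | nil => simp [sumFst]
  | cons s L ih =>
    rw [List.length_cons, Finset.sum_range_succ']
    simp only [List.getD_cons_succ, List.getD_cons_zero]
    rw [← ih]
    simp [sumFst]; omega

lemma sumSnd_eq (L : List (ℕ × ℕ)) :
    sumSnd L = ∑ t ∈ Finset.range L.length, (L.getD t (0,0)).2 := by
  induction L with
  | nil => simp [sumSnd]
  | cons s L ih =>
    rw [List.length_cons, Finset.sum_range_succ']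
    simp only [List.getD_cons_succ, List.getD_cons_zero]
    rw [← ih]
    simp [sumSnd]; omega

/-! ### The hook shape and its cells -/

lemma mem_hcells {p q : ℕ} {u : ℕ × ℕ} :
    u ∈ skewCells (hookShape p q) ⊥ ↔ u.1 ≤ q ∧ u.2 < p ∧ (u.1 = 0 ∨ u.2 = 0) := by
  simp [skewCells, hookShape, Nat.lt_succ_iff, and_assoc]

lemma rowCell {p q j : ℕ} (hj : j < p) :
    ((0, j) : ℕ × ℕ) ∈ skewCells (hookShape p q) ⊥ :=
  mem_hcells.2 ⟨Nat.zero_le _, hj, Or.inl rfl⟩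

lemma colCell {p q i : ℕ} (hp : 1 ≤ p) (hi : i ≤ q) :
    ((i, 0) : ℕ × ℕ) ∈ skewCells (hookShape p q) ⊥ :=
  mem_hcells.2 ⟨hi, hp, Or.inr rfl⟩

/-! ### Row and column entry sets of a tableau -/

def rowA (p : ℕ) (T : ℕ × ℕ → ℕ) : Finset ℕ := (Finset.range p).image fun j => T (0, j)
def colB (q : ℕ) (T : ℕ × ℕ → ℕ) : Finset ℕ := (Finset.range (q+1)).image fun i => T (i, 0)

lemma mem_rowA {p : ℕ} {T : ℕ × ℕ → ℕ} {x : ℕ} :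
    x ∈ rowA p T ↔ ∃ j < p, T (0, j) = x := by
  simp [rowA]

lemma mem_colB {q : ℕ} {T : ℕ × ℕ → ℕ} {x : ℕ} :
    x ∈ colB q T ↔ ∃ i < q + 1, T (i, 0) = x := by
  simp [colB]

section SIT

variable {p q : ℕ} {T : ℕ × ℕ → ℕ}

lemma one_le_max (hp : 1 ≤ p) (hT : IsSIT (hookShape p q) ⊥ T) :
    1 ≤ maxEntry (hookShape p q) ⊥ T :=
  le_trans (hT.1.2.1 _ (rowCell hp)) (Finset.le_sup (rowCell hp))

lemma T_zero_zero (hp : 1 ≤ p) (hT : IsSIT (hookShape p q) ⊥ T) : T (0, 0) = 1 := by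
  obtain ⟨u, hu, hTu⟩ := hT.2 1 le_rfl (one_le_max hp hT)
  obtain ⟨a, b⟩ := u
  have hc := mem_hcells.1 hu
  have h1 : 1 ≤ T (0, 0) := hT.1.2.1 _ (rowCell hp)
  rcases hc.2.2 with ha | hb
  · subst ha
    rcases Nat.eq_zero_or_pos b with hb | hb
    · subst hb; exact hTu
    · have := hT.1.2.2.1 0 0 b hb (rowCell hp) hu
      omega
  · subst hb
    rcases Nat.eq_zero_or_pos a with ha | ha
    · subst ha; exact hTu
    · have := hT.1.2.2.2 0 a 0 ha (rowCell hp) hu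
      omega

lemma rowA_card (hT : IsSIT (hookShape p q) ⊥ T) : (rowA p T).card = p := by
  rw [rowA, Finset.card_image_of_injOn, Finset.card_range]
  intro j1 h1 j2 h2 he
  have he' : T (0, j1) = T (0, j2) := he
  simp only [Finset.coe_range, Set.mem_Iio] at h1 h2
  by_contra hne
  rcases Nat.lt_or_ge j1 j2 with h | h
  · have := hT.1.2.2.1 0 j1 j2 h (rowCell h1) (rowCell h2); omega
  · have hlt : j2 < j1 := by omega
    have := hT.1.2.2.1 0 j2 j1 hlt (rowCell h2) (rowCell h1); omega

lemma colB_card (hp : 1 ≤ p) (hT : IsSIT (hookShape p q) ⊥ T) :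
    (colB q T).card = q + 1 := by
  rw [colB, Finset.card_image_of_injOn, Finset.card_range]
  intro i1 h1 i2 h2 he
  have he' : T (i1, 0) = T (i2, 0) := he
  simp only [Finset.coe_range, Set.mem_Iio, Nat.lt_succ_iff] at h1 h2
  by_contra hne
  rcases Nat.lt_or_ge i1 i2 with h | h
  · have := hT.1.2.2.2 i1 i2 0 h (colCell hp h1) (colCell hp h2); omega
  · have hlt : i2 < i1 := by omega
    have := hT.1.2.2.2 i2 i1 0 hlt (colCell hp h2) (colCell hp h1); omega

lemma union_eq (hp : 1 ≤ p) (hT : IsSIT (hookShape p q) ⊥ T) :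
    rowA p T ∪ colB q T = Finset.Icc 1 (maxEntry (hookShape p q) ⊥ T) := by
  ext x
  simp only [Finset.mem_union, Finset.mem_Icc]
  constructor
  · rintro (hx | hx)
    · obtain ⟨j, hj, rfl⟩ := mem_rowA.1 hx
      exact ⟨hT.1.2.1 _ (rowCell hj), Finset.le_sup (rowCell hj)⟩
    · obtain ⟨i, hi, rfl⟩ := mem_colB.1 hx
      have hi' : i ≤ q := by omega
      exact ⟨hT.1.2.1 _ (colCell hp hi'), Finset.le_sup (colCell hp hi')⟩
  · rintro ⟨h1, h2⟩
    obtain ⟨u, hu, hTu⟩ := hT.2 x h1 h2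
    obtain ⟨a, b⟩ := u
    have hc := mem_hcells.1 hu
    rcases hc.2.2 with ha | hb
    · subst ha; exact Or.inl (mem_rowA.2 ⟨b, hc.2.1, hTu⟩)
    · subst hb; exact Or.inr (mem_colB.2 ⟨a, by omega, hTu⟩)

lemma one_mem_rowA (hp : 1 ≤ p) (hT : IsSIT (hookShape p q) ⊥ T) : 1 ∈ rowA p T :=
  mem_rowA.2 ⟨0, hp, T_zero_zero hp hT⟩

lemma one_mem_colB (hp : 1 ≤ p) (hT : IsSIT (hookShape p q) ⊥ T) : 1 ∈ colB q T :=
  mem_colB.2 ⟨0, Nat.succ_pos _, T_zero_zero hp hT⟩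

end SIT

end HookG
namespace HookG

/-! ### The bijection maps -/

def toSteps (p q : ℕ) (T : ℕ × ℕ → ℕ) : List (ℕ × ℕ) :=
  (List.range (maxEntry (hookShape p q) ⊥ T - 1)).map fun t =>
    ((if t + 2 ∈ rowA p T then 1 else 0), (if t + 2 ∈ colB q T then 1 else 0))

def pathA (L : List (ℕ × ℕ)) : Finset ℕ :=
  insert 1 (((Finset.range L.length).filter fun t => (L.getD t (0,0)).1 = 1).image
    fun t => t + 2)

def pathB (L : List (ℕ × ℕ)) : Finset ℕ :=
  insert 1 (((Finset.range L.length).filter fun t => (L.getD t (0,0)).2 = 1).image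
    fun t => t + 2)

def toTab (p q : ℕ) (L : List (ℕ × ℕ)) : ℕ × ℕ → ℕ := fun u =>
  if u.1 = 0 ∧ u.2 < p then nth (pathA L) u.2
  else if u.2 = 0 ∧ u.1 ≤ q then nth (pathB L) u.1
  else 0

lemma toSteps_length {p q : ℕ} {T : ℕ × ℕ → ℕ} :
    (toSteps p q T).length = maxEntry (hookShape p q) ⊥ T - 1 := by
  simp [toSteps]

lemma toSteps_getD {p q t : ℕ} {T : ℕ × ℕ → ℕ}
    (ht : t < maxEntry (hookShape p q) ⊥ T - 1) :
    (toSteps p q T).getD t (0,0) =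
      ((if t + 2 ∈ rowA p T then 1 else 0), (if t + 2 ∈ colB q T then 1 else 0)) := by
  have hl : t < (toSteps p q T).length := by rwa [toSteps_length]
  rw [List.getD_eq_get _ _ ⟨t, hl⟩]
  simp only [toSteps, List.get_eq_getElem, List.getElem_map, List.getElem_range]

lemma mem_pathA {L : List (ℕ × ℕ)} {x : ℕ} :
    x ∈ pathA L ↔ x = 1 ∨ ∃ t < L.length, (L.getD t (0,0)).1 = 1 ∧ x = t + 2 := by
  simp only [pathA, Finset.mem_insert, Finset.mem_image, Finset.mem_filter,
    Finset.mem_range]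
  constructor
  · rintro (h | ⟨t, ⟨ht, h1⟩, rfl⟩)
    · exact Or.inl h
    · exact Or.inr ⟨t, ht, h1, rfl⟩
  · rintro (h | ⟨t, ht, h1, rfl⟩)
    · exact Or.inl h
    · exact Or.inr ⟨t, ⟨ht, h1⟩, rfl⟩

lemma mem_pathB {L : List (ℕ × ℕ)} {x : ℕ} :
    x ∈ pathB L ↔ x = 1 ∨ ∃ t < L.length, (L.getD t (0,0)).2 = 1 ∧ x = t + 2 := by
  simp only [pathB, Finset.mem_insert, Finset.mem_image, Finset.mem_filter,
    Finset.mem_range]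
  constructor
  · rintro (h | ⟨t, ⟨ht, h1⟩, rfl⟩)
    · exact Or.inl h
    · exact Or.inr ⟨t, ht, h1, rfl⟩
  · rintro (h | ⟨t, ht, h1, rfl⟩)
    · exact Or.inl h
    · exact Or.inr ⟨t, ⟨ht, h1⟩, rfl⟩

lemma pathA_pos {L : List (ℕ × ℕ)} : ∀ x ∈ pathA L, 1 ≤ x := by
  intro x hx
  rcases mem_pathA.1 hx with h | ⟨t, _, _, rfl⟩ <;> omega

lemma pathB_pos {L : List (ℕ × ℕ)} : ∀ x ∈ pathB L, 1 ≤ x := by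
  intro x hx
  rcases mem_pathB.1 hx with h | ⟨t, _, _, rfl⟩ <;> omega

lemma one_mem_pathA {L : List (ℕ × ℕ)} : (1:ℕ) ∈ pathA L := Finset.mem_insert_self _ _
lemma one_mem_pathB {L : List (ℕ × ℕ)} : (1:ℕ) ∈ pathB L := Finset.mem_insert_self _ _

section Path

variable {p q : ℕ} {L : List (ℕ × ℕ)}

lemma step_cases (hL : IsDelannoyPath (p - 1) q L) {t : ℕ} (ht : t < L.length) :
    L.getD t (0,0) = (1,0) ∨ L.getD t (0,0) = (0,1) ∨ L.getD t (0,0) = (1,1) := by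
  rw [List.getD_eq_get _ _ ⟨t, ht⟩]
  exact hL.1 _ (List.get_mem _ ⟨t, ht⟩)

lemma pathA_card (hp : 1 ≤ p) (hL : IsDelannoyPath (p - 1) q L) :
    (pathA L).card = p := by
  have h1 : (1:ℕ) ∉ ((Finset.range L.length).filter
      fun t => (L.getD t (0,0)).1 = 1).image (fun t => t + 2) := by
    simp only [Finset.mem_image]
    rintro ⟨t, _, h⟩; omega
  rw [pathA, Finset.card_insert_of_notMem h1,
    Finset.card_image_of_injective _ (add_left_injective 2)]
  have h2 : ((Finset.range L.length).filter fun t => (L.getD t (0,0)).1 = 1).card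
      = sumFst L := by
    rw [Finset.card_filter, sumFst_eq]
    refine Finset.sum_congr rfl fun t ht => ?_
    rcases step_cases hL (Finset.mem_range.1 ht) with h | h | h <;> rw [h] <;> simp
  rw [h2, hL.2.1]; omega

lemma pathB_card (hL : IsDelannoyPath (p - 1) q L) : (pathB L).card = q + 1 := by
  have h1 : (1:ℕ) ∉ ((Finset.range L.length).filter
      fun t => (L.getD t (0,0)).2 = 1).image (fun t => t + 2) := by
    simp only [Finset.mem_image]
    rintro ⟨t, _, h⟩; omega
  rw [pathB, Finset.card_insert_of_notMem h1,
    Finset.card_image_of_injective _ (add_left_injective 2)]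
  have h2 : ((Finset.range L.length).filter fun t => (L.getD t (0,0)).2 = 1).card
      = sumSnd L := by
    rw [Finset.card_filter, sumSnd_eq]
    refine Finset.sum_congr rfl fun t ht => ?_
    rcases step_cases hL (Finset.mem_range.1 ht) with h | h | h <;> rw [h] <;> simp
  rw [h2, hL.2.2]

lemma path_union (hL : IsDelannoyPath (p - 1) q L) :
    pathA L ∪ pathB L = Finset.Icc 1 (L.length + 1) := by
  ext x
  simp only [Finset.mem_union, Finset.mem_Icc]
  constructor
  · rintro (hx | hx)
    · rcases mem_pathA.1 hx with h | ⟨t, ht, _, rfl⟩ <;> omega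
    · rcases mem_pathB.1 hx with h | ⟨t, ht, _, rfl⟩ <;> omega
  · rintro ⟨h1, h2⟩
    rcases Nat.eq_or_lt_of_le h1 with h | h
    · exact Or.inl (mem_pathA.2 (Or.inl h.symm))
    · have ht : x - 2 < L.length := by omega
      have hx2 : x = (x - 2) + 2 := by omega
      rcases step_cases hL ht with hs | hs | hs
      · exact Or.inl (mem_pathA.2 (Or.inr ⟨x - 2, ht, by rw [hs], hx2⟩))
      · exact Or.inr (mem_pathB.2 (Or.inr ⟨x - 2, ht, by rw [hs], hx2⟩))
      · exact Or.inl (mem_pathA.2 (Or.inr ⟨x - 2, ht, by rw [hs], hx2⟩))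

end Path

end HookG
namespace HookG

section ToTab

variable {p q : ℕ} {L : List (ℕ × ℕ)}

lemma toTab_row {j : ℕ} (hj : j < p) : toTab p q L (0, j) = nth (pathA L) j := by
  simp [toTab, hj]

lemma toTab_col {i : ℕ} (hi0 : 0 < i) (hi : i ≤ q) :
    toTab p q L (i, 0) = nth (pathB L) i := by
  have : ¬ (i = 0 ∧ (0:ℕ) < p) := by omega
  simp [toTab, this, hi]

lemma toTab_zero (hp : 1 ≤ p) {u : ℕ × ℕ} (hu : u ∉ skewCells (hookShape p q) ⊥) :
    toTab p q L u = 0 := by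
  rw [toTab]
  rw [if_neg, if_neg]
  · rintro ⟨h1, h2⟩
    exact hu (mem_hcells.2 ⟨by omega, by omega, Or.inr h1⟩)
  · rintro ⟨h1, h2⟩
    exact hu (mem_hcells.2 ⟨by omega, h2, Or.inl h1⟩)

lemma nthA_zero : nth (pathA L) 0 = 1 := nth_zero one_mem_pathA pathA_pos
lemma nthB_zero : nth (pathB L) 0 = 1 := nth_zero one_mem_pathB pathB_pos

lemma toTab_mem_union (hp : 1 ≤ p) (hL : IsDelannoyPath (p - 1) q L) :
    ∀ u ∈ skewCells (hookShape p q) ⊥, toTab p q L u ∈ pathA L ∪ pathB L := by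
  intro u hu
  obtain ⟨a, b⟩ := u
  have hc := mem_hcells.1 hu
  rcases hc.2.2 with ha | hb
  · subst ha
    rw [toTab_row hc.2.1]
    exact Finset.mem_union_left _ (nth_mem (by rw [pathA_card hp hL]; exact hc.2.1))
  · subst hb
    rcases Nat.eq_zero_or_pos a with ha | ha
    · subst ha
      rw [toTab_row hp]
      exact Finset.mem_union_left _ (nth_mem (by rw [pathA_card hp hL]; exact hp))
    · rw [toTab_col ha hc.1]
      exact Finset.mem_union_right _
        (nth_mem (by rw [pathB_card hL]; omega))

lemma toTab_attains (hp : 1 ≤ p) (hL : IsDelannoyPath (p - 1) q L) :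
    ∀ x ∈ pathA L ∪ pathB L, ∃ u ∈ skewCells (hookShape p q) ⊥, toTab p q L u = x := by
  intro x hx
  rcases Finset.mem_union.1 hx with hx | hx
  · obtain ⟨j, hj, hn⟩ := nth_surj hx
    rw [pathA_card hp hL] at hj
    exact ⟨(0, j), rowCell hj, by rw [toTab_row hj, hn]⟩
  · obtain ⟨i, hi, hn⟩ := nth_surj hx
    rw [pathB_card hL] at hi
    rcases Nat.eq_zero_or_pos i with h0 | h0
    · subst h0
      refine ⟨(0, 0), rowCell hp, ?_⟩
      rw [toTab_row hp, nthA_zero, ← hn, nthB_zero]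
    · exact ⟨(i, 0), colCell hp (by omega), by rw [toTab_col h0 (by omega), hn]⟩

lemma maxEntry_toTab (hp : 1 ≤ p) (hL : IsDelannoyPath (p - 1) q L) :
    maxEntry (hookShape p q) ⊥ (toTab p q L) = L.length + 1 := by
  apply le_antisymm
  · apply Finset.sup_le
    intro u hu
    have := toTab_mem_union hp hL u hu
    rw [path_union hL, Finset.mem_Icc] at this
    exact this.2
  · have hm : L.length + 1 ∈ pathA L ∪ pathB L := by
      rw [path_union hL, Finset.mem_Icc]; omega
    obtain ⟨u, hu, hval⟩ := toTab_attains hp hL _ hm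
    rw [← hval]
    exact Finset.le_sup hu

lemma toTab_isSIT (hp : 1 ≤ p) (hL : IsDelannoyPath (p - 1) q L) :
    IsSIT (hookShape p q) ⊥ (toTab p q L) := by
  constructor
  · refine ⟨fun u hu => toTab_zero hp hu, ?_, ?_, ?_⟩
    · intro u hu
      have := toTab_mem_union hp hL u hu
      rw [path_union hL, Finset.mem_Icc] at this
      exact this.1
    · intro i j1 j2 hj hu1 hu2
      have hc1 := mem_hcells.1 hu1
      have hc2 := mem_hcells.1 hu2
      have hi : i = 0 := by rcases hc2.2.2 with h | h; exact h; omega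
      subst hi
      rw [toTab_row hc1.2.1, toTab_row hc2.2.1]
      exact nth_lt_nth hj (by rw [pathA_card hp hL]; exact hc2.2.1)
    · intro i1 i2 j hi hu1 hu2
      have hc1 := mem_hcells.1 hu1
      have hc2 := mem_hcells.1 hu2
      have hj : j = 0 := by rcases hc2.2.2 with h | h; omega; exact h
      subst hj
      have h2 : toTab p q L (i2, 0) = nth (pathB L) i2 := toTab_col (by omega) hc2.1
      rcases Nat.eq_zero_or_pos i1 with h0 | h0
      · subst h0
        rw [toTab_row hp, nthA_zero, h2, ← nthB_zero]
        exact nth_lt_nth hi (by rw [pathB_card hL]; omega)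
      · rw [toTab_col h0 hc1.1, h2]
        exact nth_lt_nth hi (by rw [pathB_card hL]; omega)
  · intro k hk1 hk2
    rw [maxEntry_toTab hp hL] at hk2
    exact toTab_attains hp hL k (by rw [path_union hL, Finset.mem_Icc]; exact ⟨hk1, hk2⟩)

end ToTab

end HookG
namespace HookG

section SITPath

variable {p q : ℕ} {T : ℕ × ℕ → ℕ}

lemma rowA_bounds (hp : 1 ≤ p) (hT : IsSIT (hookShape p q) ⊥ T) :
    ∀ x ∈ rowA p T, 1 ≤ x ∧ x ≤ maxEntry (hookShape p q) ⊥ T := fun x hx =>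
  Finset.mem_Icc.1 ((union_eq hp hT) ▸ Finset.mem_union_left _ hx)

lemma colB_bounds (hp : 1 ≤ p) (hT : IsSIT (hookShape p q) ⊥ T) :
    ∀ x ∈ colB q T, 1 ≤ x ∧ x ≤ maxEntry (hookShape p q) ⊥ T := fun x hx =>
  Finset.mem_Icc.1 ((union_eq hp hT) ▸ Finset.mem_union_right _ hx)

lemma filter_rowA_card (hp : 1 ≤ p) (hT : IsSIT (hookShape p q) ⊥ T) :
    ((Finset.range (maxEntry (hookShape p q) ⊥ T - 1)).filter
      fun t => t + 2 ∈ rowA p T).card = p - 1 := by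
  set m := maxEntry (hookShape p q) ⊥ T with hm
  have hcard : ((Finset.range (m - 1)).filter fun t => t + 2 ∈ rowA p T).card
      = ((rowA p T).erase 1).card := by
    refine Finset.card_bij' (fun a _ => a + 2) (fun b _ => b - 2) ?_ ?_ ?_ ?_
    · intro a ha
      obtain ⟨ha1, ha2⟩ := Finset.mem_filter.1 ha
      refine Finset.mem_erase.2 ⟨?_, ha2⟩
      show a + 2 ≠ 1
      omega
    · intro b hb
      obtain ⟨hb1, hb2⟩ := Finset.mem_erase.1 hb
      obtain ⟨hb3, hb4⟩ := rowA_bounds hp hT b hb2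
      show b - 2 ∈ Finset.filter _ _
      refine Finset.mem_filter.2 ⟨Finset.mem_range.2 (by omega), ?_⟩
      have : b - 2 + 2 = b := by omega
      rw [this]
      exact hb2
    · intro a ha
      show a + 2 - 2 = a
      omega
    · intro b hb
      obtain ⟨hb1, _⟩ := Finset.mem_erase.1 hb
      have := rowA_bounds hp hT b (Finset.mem_of_mem_erase hb)
      show b - 2 + 2 = b
      omega
  rw [hcard, Finset.card_erase_of_mem (one_mem_rowA hp hT), rowA_card hT]

lemma filter_colB_card (hp : 1 ≤ p) (hT : IsSIT (hookShape p q) ⊥ T) :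
    ((Finset.range (maxEntry (hookShape p q) ⊥ T - 1)).filter
      fun t => t + 2 ∈ colB q T).card = q := by
  set m := maxEntry (hookShape p q) ⊥ T with hm
  have hcard : ((Finset.range (m - 1)).filter fun t => t + 2 ∈ colB q T).card
      = ((colB q T).erase 1).card := by
    refine Finset.card_bij' (fun a _ => a + 2) (fun b _ => b - 2) ?_ ?_ ?_ ?_
    · intro a ha
      obtain ⟨ha1, ha2⟩ := Finset.mem_filter.1 ha
      refine Finset.mem_erase.2 ⟨?_, ha2⟩
      show a + 2 ≠ 1
      omega
    · intro b hb
      obtain ⟨hb1, hb2⟩ := Finset.mem_erase.1 hb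
      obtain ⟨hb3, hb4⟩ := colB_bounds hp hT b hb2
      show b - 2 ∈ Finset.filter _ _
      refine Finset.mem_filter.2 ⟨Finset.mem_range.2 (by omega), ?_⟩
      have : b - 2 + 2 = b := by omega
      rw [this]
      exact hb2
    · intro a ha
      show a + 2 - 2 = a
      omega
    · intro b hb
      obtain ⟨hb1, _⟩ := Finset.mem_erase.1 hb
      have := colB_bounds hp hT b (Finset.mem_of_mem_erase hb)
      show b - 2 + 2 = b
      omega
  rw [hcard, Finset.card_erase_of_mem (one_mem_colB hp hT), colB_card hp hT]
  omega

lemma toSteps_isDelannoy (hp : 1 ≤ p) (hT : IsSIT (hookShape p q) ⊥ T) :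
    IsDelannoyPath (p - 1) q (toSteps p q T) := by
  refine ⟨?_, ?_, ?_⟩
  · intro s hs
    obtain ⟨t, ht, rfl⟩ := List.mem_map.1 hs
    rw [List.mem_range] at ht
    have hmem : t + 2 ∈ rowA p T ∪ colB q T := by
      rw [union_eq hp hT, Finset.mem_Icc]
      omega
    by_cases hA : t + 2 ∈ rowA p T <;> by_cases hB : t + 2 ∈ colB q T
    · rw [if_pos hA, if_pos hB]; exact Or.inr (Or.inr rfl)
    · rw [if_pos hA, if_neg hB]; exact Or.inl rfl
    · rw [if_neg hA, if_pos hB]; exact Or.inr (Or.inl rfl)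
    · exact absurd (Finset.mem_union.1 hmem) (by simp [hA, hB])
  · rw [sumFst, toSteps, List.map_map, sum_list_range]
    simp only [Function.comp_apply]
    rw [← Finset.card_filter]
    exact filter_rowA_card hp hT
  · rw [sumSnd, toSteps, List.map_map, sum_list_range]
    simp only [Function.comp_apply]
    rw [← Finset.card_filter]
    exact filter_colB_card hp hT

end SITPath

end HookG
namespace HookG

section Comp

variable {p q : ℕ} {T : ℕ × ℕ → ℕ} {L : List (ℕ × ℕ)}

lemma pathA_toSteps (hp : 1 ≤ p) (hT : IsSIT (hookShape p q) ⊥ T) :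
    pathA (toSteps p q T) = rowA p T := by
  ext x
  rw [mem_pathA, toSteps_length]
  constructor
  · rintro (rfl | ⟨t, ht, h1, rfl⟩)
    · exact one_mem_rowA hp hT
    · rw [toSteps_getD ht] at h1
      have h1' : (if t + 2 ∈ rowA p T then 1 else 0) = 1 := h1
      by_cases hA : t + 2 ∈ rowA p T
      · exact hA
      · rw [if_neg hA] at h1'; omega
  · intro hx
    have hb := rowA_bounds hp hT x hx
    rcases Nat.eq_or_lt_of_le hb.1 with h | h
    · exact Or.inl h.symm
    · refine Or.inr ⟨x - 2, by omega, ?_, by omega⟩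
      rw [toSteps_getD (by omega)]
      show (if x - 2 + 2 ∈ rowA p T then 1 else 0) = 1
      have he : x - 2 + 2 = x := by omega
      rw [he, if_pos hx]

lemma pathB_toSteps (hp : 1 ≤ p) (hT : IsSIT (hookShape p q) ⊥ T) :
    pathB (toSteps p q T) = colB q T := by
  ext x
  rw [mem_pathB, toSteps_length]
  constructor
  · rintro (rfl | ⟨t, ht, h1, rfl⟩)
    · exact one_mem_colB hp hT
    · rw [toSteps_getD ht] at h1
      have h1' : (if t + 2 ∈ colB q T then 1 else 0) = 1 := h1
      by_cases hB : t + 2 ∈ colB q T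
      · exact hB
      · rw [if_neg hB] at h1'; omega
  · intro hx
    have hb := colB_bounds hp hT x hx
    rcases Nat.eq_or_lt_of_le hb.1 with h | h
    · exact Or.inl h.symm
    · refine Or.inr ⟨x - 2, by omega, ?_, by omega⟩
      rw [toSteps_getD (by omega)]
      show (if x - 2 + 2 ∈ colB q T then 1 else 0) = 1
      have he : x - 2 + 2 = x := by omega
      rw [he, if_pos hx]

lemma toTab_toSteps (hp : 1 ≤ p) (hT : IsSIT (hookShape p q) ⊥ T) :
    toTab p q (toSteps p q T) = T := by
  have hrowmem : ∀ j < p, T (0, j) ∈ rowA p T := fun j hj => mem_rowA.2 ⟨j, hj, rfl⟩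
  have hrowmono : ∀ i j, i < j → j < p → T (0, i) < T (0, j) := fun i j hij hj =>
    hT.1.2.2.1 0 i j hij (rowCell (lt_trans hij hj)) (rowCell hj)
  have hcolmem : ∀ i < q + 1, T (i, 0) ∈ colB q T := fun i hi => mem_colB.2 ⟨i, hi, rfl⟩
  have hcolmono : ∀ i j, i < j → j < q + 1 → T (i, 0) < T (j, 0) := fun i j hij hj =>
    hT.1.2.2.2 i j 0 hij (colCell hp (by omega)) (colCell hp (by omega))
  funext u
  obtain ⟨a, b⟩ := u
  by_cases hu : ((a, b) : ℕ × ℕ) ∈ skewCells (hookShape p q) ⊥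
  · have hc := mem_hcells.1 hu
    rcases hc.2.2 with ha | hb
    · subst ha
      rw [toTab_row hc.2.1, pathA_toSteps hp hT]
      exact (nth_unique (rowA_card hT) (fun j => T (0, j)) hrowmem hrowmono b hc.2.1).symm
    · subst hb
      rcases Nat.eq_zero_or_pos a with h0 | h0
      · subst h0
        rw [toTab_row hp, pathA_toSteps hp hT]
        exact (nth_unique (rowA_card hT) (fun j => T (0, j)) hrowmem hrowmono 0 hp).symm
      · rw [toTab_col h0 hc.1, pathB_toSteps hp hT]
        exact (nth_unique (colB_card hp hT) (fun i => T (i, 0)) hcolmem hcolmono a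
          (by omega)).symm
  · rw [toTab_zero hp hu, hT.1.1 _ hu]

lemma toSteps_toTab (hp : 1 ≤ p) (hL : IsDelannoyPath (p - 1) q L) :
    toSteps p q (toTab p q L) = L := by
  have hmax := maxEntry_toTab hp hL
  have hlen : (toSteps p q (toTab p q L)).length = L.length := by
    rw [toSteps_length, hmax]; omega
  have hA : rowA p (toTab p q L) = pathA L := by
    ext x
    rw [mem_rowA]
    constructor
    · rintro ⟨j, hj, rfl⟩
      rw [toTab_row hj]
      exact nth_mem (by rw [pathA_card hp hL]; exact hj)
    · intro hx
      obtain ⟨j, hj, hn⟩ := nth_surj hx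
      rw [pathA_card hp hL] at hj
      exact ⟨j, hj, by rw [toTab_row hj, hn]⟩
  have hB : colB q (toTab p q L) = pathB L := by
    ext x
    rw [mem_colB]
    constructor
    · rintro ⟨i, hi, rfl⟩
      rcases Nat.eq_zero_or_pos i with h0 | h0
      · subst h0
        rw [toTab_row hp, nthA_zero, ← nthB_zero]
        exact nth_mem (by rw [pathB_card hL]; omega)
      · rw [toTab_col h0 (by omega)]
        exact nth_mem (by rw [pathB_card hL]; omega)
    · intro hx
      obtain ⟨i, hi, hn⟩ := nth_surj hx
      rw [pathB_card hL] at hi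
      rcases Nat.eq_zero_or_pos i with h0 | h0
      · subst h0
        refine ⟨0, by omega, ?_⟩
        rw [toTab_row hp, nthA_zero, ← hn, nthB_zero]
      · exact ⟨i, hi, by rw [toTab_col h0 (by omega), hn]⟩
  have hn2A : ∀ n < L.length, (n + 2 ∈ pathA L ↔ (L.getD n (0,0)).1 = 1) := by
    intro n hn
    rw [mem_pathA]
    constructor
    · rintro (h | ⟨t, ht, h1, he⟩)
      · omega
      · have : t = n := by omega
        subst this; exact h1
    · intro h; exact Or.inr ⟨n, hn, h, rfl⟩
  have hn2B : ∀ n < L.length, (n + 2 ∈ pathB L ↔ (L.getD n (0,0)).2 = 1) := by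
    intro n hn
    rw [mem_pathB]
    constructor
    · rintro (h | ⟨t, ht, h1, he⟩)
      · omega
      · have : t = n := by omega
        subst this; exact h1
    · intro h; exact Or.inr ⟨n, hn, h, rfl⟩
  apply List.ext_get hlen
  intro n h1 h2
  have e1 : (toSteps p q (toTab p q L)).get ⟨n, h1⟩
      = (toSteps p q (toTab p q L)).getD n (0,0) := (List.getD_eq_get _ _ ⟨n, h1⟩).symm
  have e2 : L.get ⟨n, h2⟩ = L.getD n (0,0) := (List.getD_eq_get _ _ ⟨n, h2⟩).symm
  rw [e1, e2, toSteps_getD (by rw [hmax]; omega), hA, hB]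
  have hA' := hn2A n h2
  have hB' := hn2B n h2
  rcases step_cases hL h2 with hs | hs | hs <;> rw [hs] at hA' hB' ⊢ <;>
    simp at hA' hB' <;> simp [hA', hB']

end Comp

end HookG

/-- Proposition 2.2: the number of standard increasing tableaux of the hook shape
`(p,1^q)` equals the Delannoy number D(p−1, q). -/
theorem stmt5 (p q : ℕ) (hp : 1 ≤ p) :
    Nat.card {T : ℕ × ℕ → ℕ // IsSIT (hookShape p q) ⊥ T} = delannoy (p - 1) q := by
  rw [delannoy]
  exact Nat.card_congr
    ⟨fun T => ⟨toSteps p q T.1, toSteps_isDelannoy hp T.2⟩,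
     fun L => ⟨toTab p q L.1, toTab_isSIT hp L.2⟩,
     fun T => Subtype.ext (toTab_toSteps hp T.2),
     fun L => Subtype.ext (toSteps_toTab hp L.2)⟩
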